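/- arXiv:2312.13861 — 4 statements merged into one kernel-verified Lean document; each statement's English description precedes it below -/
import Mathlib

section
/- Let S be a finite set with |S| = n ≥ 1 and let S_1, ..., S_n be subsets of S such that S_i ∩ S_j ≠ ∅ for all i ≠ j, and such that every element s ∈ S belongs to at most r of the subsets S_1, ..., S_n (with r ≥ 1). Then r ≥ √n. -/
/-!
Double counting incidences shows that the sets have total size at most `r n`, so one of them,
`S_i`, has at most `r` elements. Every other set meets `S_i`, and each point of `S_i` lies in at
most `r - 1` sets besides `S_i`, so `n ≤ 1 + |S_i| (r - 1) ≤ r² - r + 1 ≤ r²`.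
-/

namespace Finset

variable {ι α : Type*} [Fintype ι] [DecidableEq α] {f : ι → Finset α} {r : ℕ}

theorem sum_card_le_card_mul_of_forall_card_filter_mem_le {S : Finset α}
    (hsub : ∀ i, f i ⊆ S) (hdeg : ∀ s ∈ S, #{i | s ∈ f i} ≤ r) :
    ∑ i, #(f i) ≤ #S * r :=
  calc ∑ i, #(f i) = ∑ i, ∑ s ∈ S, if s ∈ f i then 1 else 0 := by
        refine sum_congr rfl fun i _ => ?_
        rw [← card_filter, filter_mem_eq_inter, inter_eq_right.mpr (hsub i)]
    _ = ∑ s ∈ S, #{i | s ∈ f i} := by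
        rw [sum_comm]
        simp only [card_filter]
    _ ≤ #S * r := S.sum_le_card_nsmul _ _ hdeg

theorem card_le_card_mul_sub_one_add_one_of_pairwise_inter_nonempty [DecidableEq ι]
    (hint : ∀ i j, i ≠ j → (f i ∩ f j).Nonempty) (i : ι)
    (hdeg : ∀ s ∈ f i, #{j | s ∈ f j} ≤ r) :
    Fintype.card ι ≤ #(f i) * (r - 1) + 1 := by
  have hcover : univ.erase i ⊆ (f i).biUnion fun s => ({j | s ∈ f j} : Finset ι).erase i := by
    intro j hj
    obtain ⟨s, hs⟩ := hint i j (ne_of_mem_erase hj).symm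
    rw [mem_inter] at hs
    exact mem_biUnion.mpr ⟨s, hs.1, mem_erase.mpr ⟨ne_of_mem_erase hj, by simp [hs.2]⟩⟩
  have hcard : #(univ.erase i) ≤ #(f i) * (r - 1) :=
    calc #(univ.erase i)
        ≤ ∑ s ∈ f i, #(({j | s ∈ f j} : Finset ι).erase i) :=
          (card_le_card hcover).trans card_biUnion_le
      _ ≤ ∑ _s ∈ f i, (r - 1) := by
          refine sum_le_sum fun s hs => ?_
          rw [card_erase_of_mem (by simp [hs])]
          exact Nat.sub_le_sub_right (hdeg s hs) 1
      _ = #(f i) * (r - 1) := by rw [sum_const, smul_eq_mul]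
  rw [card_erase_of_mem (mem_univ i), card_univ] at hcard
  omega

end Finset

open Finset in
theorem stmt_0 {α : Type*} [DecidableEq α] (S : Finset α) (n : ℕ) (hn : 1 ≤ n)
    (hS : S.card = n) (f : Fin n → Finset α) (hsub : ∀ i, f i ⊆ S)
    (hint : ∀ i j : Fin n, i ≠ j → (f i ∩ f j).Nonempty)
    (r : ℕ) (hr : 1 ≤ r)
    (hcount : ∀ s ∈ S, (Finset.univ.filter (fun i : Fin n => s ∈ f i)).card ≤ r) :
    Real.sqrt n ≤ r := by
  have hsum : ∑ i, #(f i) ≤ ∑ _i : Fin n, r := by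
    simpa [hS, mul_comm] using sum_card_le_card_mul_of_forall_card_filter_mem_le hsub hcount
  obtain ⟨i, -, hi⟩ := exists_le_of_sum_le (univ_nonempty_iff.mpr ⟨⟨0, hn⟩⟩) hsum
  have hn_le : n ≤ r * r :=
    calc n = Fintype.card (Fin n) := (Fintype.card_fin n).symm
      _ ≤ #(f i) * (r - 1) + 1 :=
          card_le_card_mul_sub_one_add_one_of_pairwise_inter_nonempty hint i
            fun s hs => hcount s (hsub i hs)
      _ ≤ r * (r - 1) + 1 := by gcongr
      _ ≤ r * r := by
          rw [Nat.mul_sub_one]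
          have := Nat.le_mul_self r
          omega
  rw [Real.sqrt_le_left (by positivity), sq]
  exact_mod_cast hn_le
end

section
/- Let S be a finite set with |S| = n ≥ 1 and let S_1, ..., S_n be subsets of S such that S_i ∩ S_j ≠ ∅ for all i ≠ j, and such that every element s ∈ S belongs to at most r of the subsets S_1, ..., S_n (with r ≥ 1). Then r(r−1) ≥ n−1. -/
/-!
Double counting the incidences gives `∑ |S_i| ≤ n r`, so some `S_i` has at most `r` elements.
Every other `S_j` meets `S_i`, and each point of `S_i` lies in at most `r - 1` further sets,
hence `n - 1 ≤ |S_i| (r - 1) ≤ r (r - 1)`.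
-/

open Finset

section

variable {ι α : Type*} [Fintype ι] [DecidableEq α]

theorem Finset.sum_card_le_card_mul_of_subset {S : Finset α} {f : ι → Finset α}
    (hsub : ∀ i, f i ⊆ S) {r : ℕ} (hcount : ∀ s ∈ S, #{i | s ∈ f i} ≤ r) :
    ∑ i, #(f i) ≤ #S * r :=
  calc ∑ i, #(f i) = ∑ i, #(S.bipartiteAbove (fun i s ↦ s ∈ f i) i) := by
        simp only [bipartiteAbove, filter_mem_eq_inter, inter_eq_right.2 (hsub _)]
    _ = ∑ s ∈ S, #(univ.bipartiteBelow (fun i s ↦ s ∈ f i) s) :=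
        sum_card_bipartiteAbove_eq_sum_card_bipartiteBelow _
    _ ≤ #S * r := by simpa [bipartiteBelow] using S.sum_le_card_nsmul _ r hcount

theorem Finset.exists_card_le_of_card_eq [Nonempty ι] {S : Finset α} (hS : #S = Fintype.card ι)
    {f : ι → Finset α} (hsub : ∀ i, f i ⊆ S) {r : ℕ} (hcount : ∀ s ∈ S, #{i | s ∈ f i} ≤ r) :
    ∃ i, #(f i) ≤ r := by
  have hsum : ∑ i, #(f i) ≤ ∑ _i : ι, r := by
    simpa [hS] using sum_card_le_card_mul_of_subset hsub hcount
  obtain ⟨i, -, hi⟩ := exists_le_of_sum_le univ_nonempty hsum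
  exact ⟨i, hi⟩

theorem Finset.card_sub_one_le_card_mul_of_intersecting [DecidableEq ι] {f : ι → Finset α}
    (hint : ∀ i j, i ≠ j → (f i ∩ f j).Nonempty) {r : ℕ} (i : ι)
    (hcount : ∀ s ∈ f i, #{j | s ∈ f j} ≤ r) :
    Fintype.card ι - 1 ≤ #(f i) * (r - 1) := by
  have hcover : univ.erase i ⊆ (f i).biUnion fun s ↦ ({j | s ∈ f j} : Finset ι).erase i := by
    intro j hj
    obtain ⟨s, hs⟩ := hint i j (ne_of_mem_erase hj).symm
    obtain ⟨hsi, hsj⟩ := mem_inter.1 hs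
    exact mem_biUnion.2 ⟨s, hsi, mem_erase.2 ⟨ne_of_mem_erase hj, mem_filter.2 ⟨mem_univ j, hsj⟩⟩⟩
  have hfiber : ∀ s ∈ f i, #(({j | s ∈ f j} : Finset ι).erase i) ≤ r - 1 := fun s hs ↦ by
    rw [card_erase_of_mem (mem_filter.2 ⟨mem_univ i, hs⟩)]
    exact Nat.sub_le_sub_right (hcount s hs) 1
  calc Fintype.card ι - 1 = #(univ.erase i) := by rw [card_erase_of_mem (mem_univ i), card_univ]
    _ ≤ _ := card_le_card hcover
    _ ≤ #(f i) * (r - 1) := card_biUnion_le_card_mul _ _ _ hfiber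

end

theorem stmt_2_general {α : Type*} [DecidableEq α] (S : Finset α) (n : ℕ)
    (hS : S.card = n) (f : Fin n → Finset α) (hsub : ∀ i, f i ⊆ S)
    (hint : ∀ i j : Fin n, i ≠ j → (f i ∩ f j).Nonempty)
    (r : ℕ)
    (hcount : ∀ s ∈ S, (Finset.univ.filter (fun i : Fin n => s ∈ f i)).card ≤ r) :
    n - 1 ≤ r * (r - 1) := by
  obtain rfl | hn := n.eq_zero_or_pos
  · simp
  have : Nonempty (Fin n) := Fin.pos_iff_nonempty.1 hn
  obtain ⟨i, hi⟩ := exists_card_le_of_card_eq (hS.trans (Fintype.card_fin n).symm) hsub hcount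
  calc n - 1 = Fintype.card (Fin n) - 1 := by rw [Fintype.card_fin]
    _ ≤ #(f i) * (r - 1) :=
        card_sub_one_le_card_mul_of_intersecting hint i fun s hs ↦ hcount s (hsub i hs)
    _ ≤ r * (r - 1) := Nat.mul_le_mul_right _ hi

theorem stmt_2 {α : Type*} [DecidableEq α] (S : Finset α) (n : ℕ) (hn : 1 ≤ n)
    (hS : S.card = n) (f : Fin n → Finset α) (hsub : ∀ i, f i ⊆ S)
    (hint : ∀ i j : Fin n, i ≠ j → (f i ∩ f j).Nonempty)
    (r : ℕ) (hr : 1 ≤ r)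
    (hcount : ∀ s ∈ S, (Finset.univ.filter (fun i : Fin n => s ∈ f i)).card ≤ r) :
    n - 1 ≤ r * (r - 1) :=
  stmt_2_general S n hS f hsub hint r hcount
end

section
/- Let K_m be the complete simple graph on m ≥ 2 vertices with edge set E, and let E = E_1 ∪ ... ∪ E_n be a partition of E into n ≥ 1 parts. Let α = min_i (|E_i| · n / |E|) be the load balance and let RF = (∑_{i=1}^n |V(E_i)|) / m be the replication factor, where V(E_i) denotes the set of vertices incident to at least one edge of E_i. Then RF ≥ √α · √n · √((m−1)/m). -/
/-!
A part `E i` with `k` incident vertices has at most `k.choose 2 ≤ k ^ 2 / 2` edges, while the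
load balance forces it to have at least `α |E| / n = α m (m - 1) / (2 n)` edges. Hence every part
touches at least `√(α m (m - 1) / n)` vertices, and summing over the `n` parts and dividing by `m`
gives the bound on the replication factor.
-/

open Finset

lemma Finset.card_le_choose_two_of_forall_mem {V : Type*} [DecidableEq V] {S : Finset (Sym2 V)}
    {s : Finset V} (hdiag : ∀ e ∈ S, ¬e.IsDiag) (hmem : ∀ e ∈ S, ∀ v ∈ e, v ∈ s) :
    S.card ≤ s.card.choose 2 := by
  rw [← Sym2.card_image_offDiag]
  refine card_le_card fun e he => ?_
  induction e using Sym2.ind with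
  | _ u v =>
    refine mem_image.mpr ⟨(u, v), mem_offDiag.mpr ⟨?_, ?_, hdiag _ he⟩, rfl⟩
    · exact hmem _ he u (Sym2.mem_mk_left u v)
    · exact hmem _ he v (Sym2.mem_mk_right u v)

lemma Real.sqrt_two_mul_le_of_le_choose_two {x : ℝ} {k : ℕ} (h : x ≤ k.choose 2) :
    √(2 * x) ≤ k := by
  rw [Nat.cast_choose_two] at h
  rw [Real.sqrt_le_left (Nat.cast_nonneg k)]
  nlinarith [Nat.cast_nonneg (α := ℝ) k]

lemma mul_div_le_of_le_mul_div {a k M n : ℝ} (hk : 0 ≤ k) (hM : 0 ≤ M) (hn : 0 < n)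
    (h : a ≤ k * n / M) : a * M / n ≤ k := by
  rcases hM.eq_or_lt with rfl | hM
  · simpa using hk
  · rw [div_le_iff₀ hn]
    rwa [le_div_iff₀ hM] at h

lemma Real.sqrt_mul_sqrt_mul_sqrt_sub_one_div {a n m : ℝ} (ha : 0 ≤ a) (hn : 0 < n)
    (hm : 0 ≤ m) :
    √a * √n * √((m - 1) / m) = n * √(a * (m * (m - 1)) / n) / m := by
  rcases hm.eq_or_lt with rfl | hm
  · simp
  have hsq : a * n * ((m - 1) / m) = (n / m) ^ 2 * (a * (m * (m - 1)) / n) := by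
    field_simp
  rw [← Real.sqrt_mul ha, ← Real.sqrt_mul (by positivity), hsq, Real.sqrt_mul (sq_nonneg _),
    Real.sqrt_sq (by positivity)]
  ring

theorem stmt_3_general (m n : ℕ) (hn : 1 ≤ n)
    (E : Fin n → Finset (Sym2 (Fin m)))
    (hcover : Finset.univ.biUnion E = (⊤ : SimpleGraph (Fin m)).edgeFinset)
    (α RF : ℝ)
    (hα : α = Finset.univ.inf'
      (Finset.univ_nonempty_iff.mpr ⟨⟨0, hn⟩⟩)
      (fun i : Fin n => ((E i).card : ℝ) * n / ((⊤ : SimpleGraph (Fin m)).edgeFinset.card : ℝ)))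
    (hRF : RF = (∑ i : Fin n,
      ((Finset.univ.filter (fun v : Fin m => ∃ e ∈ E i, v ∈ e)).card : ℝ)) / m) :
    Real.sqrt α * Real.sqrt n * Real.sqrt (((m : ℝ) - 1) / m) ≤ RF := by
  have hM : 2 * ((⊤ : SimpleGraph (Fin m)).edgeFinset.card : ℝ) = m * (m - 1) := by
    rw [SimpleGraph.card_edgeFinset_top_eq_card_choose_two, Fintype.card_fin, Nat.cast_choose_two]
    ring
  set M : ℝ := ((⊤ : SimpleGraph (Fin m)).edgeFinset.card : ℝ)
  set V : Fin n → Finset (Fin m) := fun i => univ.filter fun v => ∃ e ∈ E i, v ∈ e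
  have hn0 : (0 : ℝ) < n := by exact_mod_cast hn
  have hα0 : 0 ≤ α := hα ▸ le_inf' _ _ fun i _ => by positivity
  have hload (i : Fin n) : α * M / n ≤ (E i).card :=
    mul_div_le_of_le_mul_div (Nat.cast_nonneg _) (Nat.cast_nonneg _) hn0
      (hα ▸ inf'_le _ (mem_univ i))
  have hedges (i : Fin n) : (E i).card ≤ (V i).card.choose 2 := by
    have hsub : E i ⊆ (⊤ : SimpleGraph (Fin m)).edgeFinset :=
      hcover ▸ subset_biUnion_of_mem E (mem_univ i)
    refine card_le_choose_two_of_forall_mem (fun e he => ?_) fun e he v hv => ?_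
    · simpa using hsub he
    · simpa [V] using ⟨e, he, hv⟩
  have hpart (i : Fin n) : √(α * (m * (m - 1)) / n) ≤ (V i).card := by
    have hdouble : 2 * (α * M / n) = α * (m * (m - 1)) / n := by rw [← hM]; ring
    exact hdouble ▸ Real.sqrt_two_mul_le_of_le_choose_two
      ((hload i).trans (by exact_mod_cast hedges i))
  have hsum := card_nsmul_le_sum univ (fun i => ((V i).card : ℝ)) _ fun i _ => hpart i
  rw [card_univ, Fintype.card_fin, nsmul_eq_mul] at hsum
  rw [hRF, Real.sqrt_mul_sqrt_mul_sqrt_sub_one_div hα0 hn0 (Nat.cast_nonneg m)]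
  gcongr

theorem stmt_3 (m n : ℕ) (hm : 2 ≤ m) (hn : 1 ≤ n)
    (E : Fin n → Finset (Sym2 (Fin m)))
    (hdisj : ∀ i j : Fin n, i ≠ j → Disjoint (E i) (E j))
    (hcover : Finset.univ.biUnion E = (⊤ : SimpleGraph (Fin m)).edgeFinset)
    (α RF : ℝ)
    (hα : α = Finset.univ.inf'
      (Finset.univ_nonempty_iff.mpr ⟨⟨0, hn⟩⟩)
      (fun i : Fin n => ((E i).card : ℝ) * n / ((⊤ : SimpleGraph (Fin m)).edgeFinset.card : ℝ)))
    (hRF : RF = (∑ i : Fin n,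
      ((Finset.univ.filter (fun v : Fin m => ∃ e ∈ E i, v ∈ e)).card : ℝ)) / m) :
    Real.sqrt α * Real.sqrt n * Real.sqrt (((m : ℝ) - 1) / m) ≤ RF :=
  stmt_3_general m n hn E hcover α RF hα hRF
end

section
/- Let F be a finite field. There exists an injective map φ from the set of projective lines of the projective plane P²(F) to the set of points of P²(F) such that for every line L, the point φ(L) lies on L. -/
/-!
Every line of `ℙ²(F)` carries `q + 1` points and, dually, every point lies on `q + 1` lines,
where `q = |F|`. So the point–line incidence graph is a `(q + 1)`-regular bipartite graph, and
double counting the edges leaving any set of lines verifies Hall's condition for a matching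
from lines into points.
-/

open LinearAlgebra.Projectivization Matrix Finset

theorem exists_injective_of_le_card_of_card_le {ι α : Type*} [Finite ι] [Finite α]
    (r : ι → α → Prop) {d : ℕ} (hd : 0 < d) (hι : ∀ i, d ≤ Nat.card {a // r i a})
    (hα : ∀ a, Nat.card {i // r i a} ≤ d) :
    ∃ f : ι → α, Function.Injective f ∧ ∀ i, r i (f i) := by
  classical
  have := Fintype.ofFinite ι
  have := Fintype.ofFinite α
  let t : ι → Finset α := fun i => {a | r i a}
  suffices hall : ∀ s : Finset ι, #s ≤ #(s.biUnion t) by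
    obtain ⟨f, hf, hft⟩ := (all_card_le_biUnion_card_iff_exists_injective t).mp hall
    exact ⟨f, hf, fun i => (mem_filter.mp (hft i)).2⟩
  intro s
  refine Nat.le_of_mul_le_mul_right ?_ hd
  refine card_nsmul_le_card_nsmul r (fun i hi => ?_) (fun a _ => ?_)
  · have : (s.biUnion t).bipartiteAbove r i = t i := by
      ext a
      simp only [mem_bipartiteAbove, mem_biUnion, mem_filter, mem_univ, true_and, t]
      exact ⟨And.right, fun h => ⟨⟨i, hi, h⟩, h⟩⟩
    rw [this, ← Fintype.card_subtype, ← Nat.card_eq_fintype_card]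
    exact hι i
  · calc #(s.bipartiteBelow r a)
        ≤ #({i | r i a} : Finset ι) := card_le_card (filter_subset_filter _ (subset_univ s))
      _ = Nat.card {i // r i a} := by rw [Nat.card_eq_fintype_card, Fintype.card_subtype]
      _ ≤ d := hα a

namespace Projectivization

variable {K V : Type*} [Field K] [AddCommGroup V] [Module K V]

theorem range_map_subtype (W : Submodule K V) :
    Set.range (map W.subtype W.injective_subtype) = {P : ℙ K V | P.rep ∈ W} := by
  ext P
  constructor
  · rintro ⟨Q, rfl⟩
    induction Q using ind with | h w hw =>
    rw [Set.mem_ofPred_eq, map_mk]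
    obtain ⟨a, ha⟩ := exists_smul_eq_mk_rep K (W.subtype w) (by simpa using hw)
    rw [← ha]
    exact W.smul_of_tower_mem a w.2
  · intro hP
    refine ⟨mk K ⟨P.rep, hP⟩ (by simpa using P.rep_nonzero), ?_⟩
    rw [map_mk]
    exact mk_rep P

theorem card_rep_mem (W : Submodule K V) :
    Nat.card {P : ℙ K V // P.rep ∈ W} = Nat.card (ℙ K W) := by
  rw [← Set.coe_ofPred, ← range_map_subtype, Nat.card_range_of_injective (map_injective _ _)]

theorem card_rep_mem_ker [Finite K] [FiniteDimensional K V] {f : Module.Dual K V} (hf : f ≠ 0) :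
    Nat.card {P : ℙ K V // f P.rep = 0} =
      ∑ i ∈ range (Module.finrank K V - 1), Nat.card K ^ i := by
  have hker := card_rep_mem (LinearMap.ker f)
  simp only [LinearMap.mem_ker] at hker
  rw [hker, card_of_finrank]
  have := f.finrank_ker_add_one_of_ne_zero hf
  omega

theorem card_rep_dotProduct_eq_zero [Finite K] {n : Type*} [Fintype n] [DecidableEq n]
    {v : n → K} (hv : v ≠ 0) :
    Nat.card {P : ℙ K (n → K) // P.rep ⬝ᵥ v = 0} =
      ∑ i ∈ range (Fintype.card n - 1), Nat.card K ^ i := by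
  have hf : dotProductEquiv K n v ≠ 0 := (LinearEquiv.map_ne_zero_iff _).mpr hv
  simpa only [dotProductEquiv_apply_apply, dotProduct_comm v, Module.finrank_pi] using
    card_rep_mem_ker hf

end Projectivization

theorem stmt_14 (F : Type*) [Field F] [Fintype F] :
    ∃ φ : ℙ F (Fin 3 → F) → ℙ F (Fin 3 → F),
      Function.Injective φ ∧ ∀ L : ℙ F (Fin 3 → F), (φ L).rep ⬝ᵥ L.rep = 0 := by
  have hpoints (v : Fin 3 → F) (hv : v ≠ 0) :
      Nat.card {P : ℙ F (Fin 3 → F) // P.rep ⬝ᵥ v = 0} = Nat.card F + 1 := by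
    simp [Projectivization.card_rep_dotProduct_eq_zero hv, sum_range_succ, add_comm]
  refine exists_injective_of_le_card_of_card_le (fun L P : ℙ F (Fin 3 → F) => P.rep ⬝ᵥ L.rep = 0)
    (d := Nat.card F + 1) (Nat.succ_pos _) (fun L => (hpoints L.rep L.rep_nonzero).ge) fun P => ?_
  rw [← hpoints P.rep P.rep_nonzero]
  exact (Nat.card_congr (Equiv.subtypeEquivRight fun L => by rw [dotProduct_comm])).le
end
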